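/- For independent real-valued random variables X_1,...,X_n, X_[1] the maximum, Y_i independent copies of the X_i, and any t > 0: E[e^{t(X_[1]+X_[2])}] ≤ (E[e^{tX_[1]}])² = E[e^{t(X_[1]+Y_[1])}], assuming the functional BKR inequality (a). -/

import Mathlib

open MeasureTheory ENNReal Real

/-- `f` depends (only) on the coordinates in `K`. -/
def DepOn {n : ℕ} (f : (Fin n → ℝ) → ℝ≥0∞) (K : Finset (Fin n)) : Prop :=
  ∀ x y : Fin n → ℝ, (∀ i ∈ K, x i = y i) → f x = f y

def FunctionalBKR {n : ℕ} (μ : Fin n → Measure ℝ) [∀ i, SigmaFinite (μ i)] : Prop :=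
  ∀ (ι κ : Type) [Countable ι] [Countable κ]
    (f : ι → (Fin n → ℝ) → ℝ≥0∞) (g : κ → (Fin n → ℝ) → ℝ≥0∞)
    (K : ι → Finset (Fin n)) (L : κ → Finset (Fin n)),
    (∀ a, Measurable (f a)) → (∀ b, Measurable (g b)) →
    (∀ a, DepOn (f a) (K a)) → (∀ b, DepOn (g b) (L b)) →
    ∫⁻ x, ⨆ (a : ι) (b : κ) (_ : Disjoint (K a) (L b)), f a x * g b x
        ∂(Measure.pi μ) ≤
      (∫⁻ x, ⨆ a, f a x ∂(Measure.pi μ)) * ∫⁻ x, ⨆ b, g b x ∂(Measure.pi μ)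

lemma depOn_singleton_comp_eval {n : ℕ} (φ : ℝ → ℝ≥0∞) (i : Fin n) :
    DepOn (fun x => φ (x i)) {i} :=
  fun _ _ hxy => congrArg φ (hxy i (Finset.mem_singleton_self i))

theorem FunctionalBKR.lintegral_iSup_ne_mul_le_sq {n : ℕ} {μ : Fin n → Measure ℝ}
    [∀ i, SigmaFinite (μ i)] (hBKR : FunctionalBKR μ) {φ : Fin n → ℝ → ℝ≥0∞}
    (hφ : ∀ i, Measurable (φ i)) :
    ∫⁻ x, ⨆ (i : Fin n) (j : Fin n) (_ : i ≠ j), φ i (x i) * φ j (x j) ∂(Measure.pi μ) ≤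
      (∫⁻ x, ⨆ i, φ i (x i) ∂(Measure.pi μ)) ^ 2 := by
  have hmeas : ∀ i, Measurable fun x : Fin n → ℝ => φ i (x i) :=
    fun i => (hφ i).comp (measurable_pi_apply i)
  have hdep : ∀ i, DepOn (fun x => φ i (x i)) {i} := fun i => depOn_singleton_comp_eval _ i
  simpa only [Finset.disjoint_singleton, sq] using
    hBKR (Fin n) (Fin n) _ _ _ _ hmeas hmeas hdep hdep

lemma measurable_ofReal_exp_const_mul {t : ℝ} :
    Measurable fun s : ℝ => ENNReal.ofReal (exp (t * s)) :=
  ENNReal.measurable_ofReal.comp (measurable_exp.comp (measurable_const.mul measurable_id))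

theorem mgf_order_statistics_general {n : ℕ} {t : ℝ}
    (μ : Fin n → Measure ℝ) [∀ i, IsProbabilityMeasure (μ i)]
    (ha : ∀ (ι κ : Type) [Countable ι] [Countable κ]
      (f : ι → (Fin n → ℝ) → ℝ≥0∞) (g : κ → (Fin n → ℝ) → ℝ≥0∞)
      (K : ι → Finset (Fin n)) (L : κ → Finset (Fin n)),
      (∀ a, Measurable (f a)) → (∀ b, Measurable (g b)) →
      (∀ a, DepOn (f a) (K a)) → (∀ b, DepOn (g b) (L b)) →
      ∫⁻ x, ⨆ (a : ι) (b : κ) (_ : Disjoint (K a) (L b)), f a x * g b x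
          ∂(Measure.pi μ) ≤
        (∫⁻ x, ⨆ a, f a x ∂(Measure.pi μ)) * ∫⁻ x, ⨆ b, g b x ∂(Measure.pi μ)) :
    (∫⁻ x, ⨆ (i : Fin n) (j : Fin n) (_ : i ≠ j),
        ENNReal.ofReal (exp (t * x i) * exp (t * x j)) ∂(Measure.pi μ)) ≤
      (∫⁻ x, ⨆ i, ENNReal.ofReal (exp (t * x i)) ∂(Measure.pi μ)) ^ 2 ∧
    (∫⁻ x, ⨆ i, ENNReal.ofReal (exp (t * x i)) ∂(Measure.pi μ)) ^ 2 =
      ∫⁻ p, (⨆ i, ENNReal.ofReal (exp (t * p.1 i))) *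
          ⨆ j, ENNReal.ofReal (exp (t * p.2 j))
        ∂((Measure.pi μ).prod (Measure.pi μ)) := by
  have hmax : Measurable fun x : Fin n → ℝ => ⨆ i, ENNReal.ofReal (exp (t * x i)) :=
    .iSup fun i => measurable_ofReal_exp_const_mul.comp (measurable_pi_apply i)
  constructor
  · simpa only [ENNReal.ofReal_mul (exp_nonneg _)] using
      FunctionalBKR.lintegral_iSup_ne_mul_le_sq ha fun _ => measurable_ofReal_exp_const_mul
  · rw [sq, lintegral_prod_mul hmax.aemeasurable hmax.aemeasurable]

/-- For independent real random variables `X_1, …, X_n` (joint law the product measure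
`Measure.pi μ`), an independent copy `Y`, and `t > 0`, assuming the functional BKR
inequality (a): `E[e^{t(X_[1]+X_[2])}] ≤ (E[e^{tX_[1]}])² = E[e^{t(X_[1]+Y_[1])}]`,
where `e^{t(X_[1]+X_[2])} = max_{i ≠ j} e^{tX_i} e^{tX_j}` and
`e^{tX_[1]} = max_i e^{tX_i}`. -/
theorem mgf_order_statistics {n : ℕ} (hn : 2 ≤ n) {t : ℝ} (ht : 0 < t)
    (μ : Fin n → Measure ℝ) [∀ i, IsProbabilityMeasure (μ i)]
    (ha : ∀ (ι κ : Type) [Countable ι] [Countable κ]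
      (f : ι → (Fin n → ℝ) → ℝ≥0∞) (g : κ → (Fin n → ℝ) → ℝ≥0∞)
      (K : ι → Finset (Fin n)) (L : κ → Finset (Fin n)),
      (∀ a, Measurable (f a)) → (∀ b, Measurable (g b)) →
      (∀ a, DepOn (f a) (K a)) → (∀ b, DepOn (g b) (L b)) →
      ∫⁻ x, ⨆ (a : ι) (b : κ) (_ : Disjoint (K a) (L b)), f a x * g b x
          ∂(Measure.pi μ) ≤
        (∫⁻ x, ⨆ a, f a x ∂(Measure.pi μ)) * ∫⁻ x, ⨆ b, g b x ∂(Measure.pi μ)) :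
    (∫⁻ x, ⨆ (i : Fin n) (j : Fin n) (_ : i ≠ j),
        ENNReal.ofReal (exp (t * x i) * exp (t * x j)) ∂(Measure.pi μ)) ≤
      (∫⁻ x, ⨆ i, ENNReal.ofReal (exp (t * x i)) ∂(Measure.pi μ)) ^ 2 ∧
    (∫⁻ x, ⨆ i, ENNReal.ofReal (exp (t * x i)) ∂(Measure.pi μ)) ^ 2 =
      ∫⁻ p, (⨆ i, ENNReal.ofReal (exp (t * p.1 i))) *
          ⨆ j, ENNReal.ofReal (exp (t * p.2 j))
        ∂((Measure.pi μ).prod (Measure.pi μ)) :=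
  mgf_order_statistics_general μ ha
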